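/- Let S be a t-conorm and X a set with at least two elements. Every fuzzy binary relation R on X admits a weak decomposition with respect to S if and only if S is continuous in its first coordinate. -/

import Mathlib

structure Tconorm where
  S : unitInterval → unitInterval → unitInterval
  comm : ∀ a b, S a b = S b a
  assoc : ∀ a b c, S a (S b c) = S (S a b) c
  mono : ∀ a b c d, a ≤ c → b ≤ d → S a b ≤ S c d
  S_zero : ∀ a, S a 0 = a
  S_one : ∀ a, S a 1 = 1

structure Tnorm where
  T : unitInterval → unitInterval → unitInterval
  comm : ∀ a b, T a b = T b a
  assoc : ∀ a b c, T a (T b c) = T (T a b) c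
  mono : ∀ a b c d, a ≤ c → b ≤ d → T a b ≤ T c d
  T_one : ∀ a, T a 1 = a
  T_zero : ∀ a, T a 0 = 0

/-- A fuzzy binary relation `P` is asymmetric. -/
def FAsymm {X : Type*} (P : X → X → unitInterval) : Prop :=
  ∀ x y, 0 < P x y → P y x = 0

/-- A fuzzy binary relation `I` is symmetric. -/
def FSymm {X : Type*} (I : X → X → unitInterval) : Prop :=
  ∀ x y, I x y = I y x

/-- `(P, I)` is a weak decomposition of `R` with respect to the t-conorm `S`. -/
def IsWeakDecomp {X : Type*} (S : Tconorm) (R P I : X → X → unitInterval) : Prop :=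
  FAsymm P ∧ FSymm I ∧ (∀ x y, R x y = S.S (P x y) (I x y)) ∧
    ∀ x y, I x y = 1 → P x y = 0

/-- `(P, I)` is a strong decomposition of `R` with respect to `(T, S)`. -/
def IsStrongDecomp {X : Type*} (T : Tnorm) (S : Tconorm)
    (R P I : X → X → unitInterval) : Prop :=
  FAsymm P ∧ FSymm I ∧ (∀ x y, R x y = S.S (P x y) (I x y)) ∧
    ∀ x y, T.T (P x y) (I x y) = 0

/-- The triplet `(R, P, I)` is a fuzzy preference (FP1–FP6). -/
def IsFuzzyPref {X : Type*} (R P I : X → X → unitInterval) : Prop :=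
  (∀ x y, 0 < P x y → P y x = 0) ∧
  (∀ x y, I x y = I y x) ∧
  (∀ x y, P x y ≤ R x y) ∧
  (∀ x y, R y x < R x y ↔ 0 < P x y) ∧
  (∀ x y, P x y = 0 → R x y = I x y) ∧
  (∀ x y z w, I x y ≤ I z w → P x y ≤ P z w → R x y ≤ R z w)

/-!
Continuity of `a ↦ S a b` on `[0, 1]` amounts to `S · b` hitting every value of `[b, 1]`: it is
monotone from `S 0 b = b` to `S 1 b = 1`, so the intermediate value theorem gives one direction and
a monotone surjection between intervals is continuous for the other.

In any weak decomposition with `R y x < R x y`, `P x y` cannot vanish, so asymmetry kills `P y x`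
and forces `I = R y x`; hence `R x y = S (P x y) (R y x)`. Applied to a relation taking the values
`r` and `b < r` on the two orientations of a pair, this solves `S t b = r`. Conversely, these
solutions yield the canonical decomposition with `I x y = min (R x y) (R y x)`.
-/

namespace Tconorm

variable (S : Tconorm)

theorem zero_S (b : unitInterval) : S.S 0 b = b := by
  rw [S.comm, S.S_zero]

theorem one_S (b : unitInterval) : S.S 1 b = 1 := by
  rw [S.comm, S.S_one]

theorem le_S_right (a b : unitInterval) : b ≤ S.S a b :=
  calc b = S.S 0 b := (S.zero_S b).symm
    _ ≤ S.S a b := S.mono 0 b a b unitInterval.nonneg' le_rfl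

theorem continuous_left_iff (b : unitInterval) :
    Continuous (fun a => S.S a b) ↔ ∀ r, b < r → ∃ t, S.S t b = r := by
  constructor
  · intro hc r hbr
    have hivt := intermediate_value_univ (0 : unitInterval) 1 hc
    rw [S.zero_S, S.one_S] at hivt
    exact hivt ⟨hbr.le, unitInterval.le_one r⟩
  · intro hsolve
    let g : unitInterval → Set.Icc b 1 := fun a => ⟨S.S a b, S.le_S_right a b, unitInterval.le_one _⟩
    have hmono : Monotone g := fun a a' h => Subtype.mk_le_mk.mpr (S.mono a b a' b h le_rfl)
    have hsurj : Function.Surjective g := by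
      rintro ⟨r, hbr, -⟩
      rcases hbr.eq_or_lt with rfl | hlt
      · exact ⟨0, Subtype.ext (S.zero_S _)⟩
      · obtain ⟨t, ht⟩ := hsolve r hlt
        exact ⟨t, Subtype.ext ht⟩
    exact continuous_subtype_val.comp (hmono.continuous_of_surjective hsurj)

end Tconorm

namespace IsWeakDecomp

variable {X : Type*} {S : Tconorm} {R P I : X → X → unitInterval}

theorem S_eq_of_lt (h : IsWeakDecomp S R P I) {x y : X} (hlt : R y x < R x y) :
    S.S (P x y) (R y x) = R x y := by
  obtain ⟨hasymm, hsymm, hR, -⟩ := h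
  have hIR : I y x ≤ R y x := (hR y x).symm ▸ S.le_S_right _ _
  have hP : 0 < P x y := by
    refine lt_of_le_of_ne unitInterval.nonneg' fun hP => hlt.not_ge ?_
    calc R x y = I y x := by rw [hR, ← hP, S.zero_S, hsymm]
      _ ≤ R y x := hIR
  have hI : R y x = I x y := by rw [hR y x, hasymm x y hP, S.zero_S, hsymm]
  rw [hI, hR x y]

end IsWeakDecomp

theorem exists_isWeakDecomp {X : Type*} {S : Tconorm}
    (hsolve : ∀ b r : unitInterval, b < r → ∃ t, S.S t b = r) (R : X → X → unitInterval) :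
    ∃ P I : X → X → unitInterval, IsWeakDecomp S R P I := by
  classical
  let P : X → X → unitInterval := fun x y =>
    if hlt : R y x < R x y then (hsolve _ _ hlt).choose else 0
  refine ⟨P, fun x y => min (R x y) (R y x), ?_, fun x y => min_comm _ _, ?_, ?_⟩
  · intro x y hP
    have hlt : R y x < R x y := by
      by_contra hge
      simp only [P, dif_neg hge, lt_self_iff_false] at hP
    simp only [P, dif_neg hlt.not_gt]
  · intro x y
    by_cases hlt : R y x < R x y
    · simp only [P, dif_pos hlt, min_eq_right hlt.le]
      exact (hsolve _ _ hlt).choose_spec.symm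
    · simp only [P, dif_neg hlt, S.zero_S, min_eq_left (not_lt.mp hlt)]
  · intro x y hI
    have hRyx : R y x = 1 := le_antisymm (unitInterval.le_one _) (hI ▸ min_le_right _ _)
    simp only [P, hRyx]
    exact dif_neg (unitInterval.le_one _).not_gt

/-- Every fuzzy binary relation on a set with at least two elements admits a weak
decomposition with respect to `S` iff `S` is continuous in the first coordinate. -/
theorem weak_decomposable_iff_continuous {X : Type*} (hX : ∃ x y : X, x ≠ y)
    (S : Tconorm) :
    (∀ R : X → X → unitInterval, ∃ P I : X → X → unitInterval, IsWeakDecomp S R P I) ↔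
    (∀ b, Continuous fun a => S.S a b) := by
  simp only [S.continuous_left_iff]
  constructor
  · intro hdec b r hbr
    obtain ⟨x, y, hxy⟩ := hX
    classical
    let R : X → X → unitInterval := fun u _ => if u = x then r else b
    have hRxy : R x y = r := if_pos rfl
    have hRyx : R y x = b := if_neg hxy.symm
    obtain ⟨P, I, hdecR⟩ := hdec R
    have hsolved := hdecR.S_eq_of_lt (x := x) (y := y) (by rwa [hRxy, hRyx])
    rw [hRxy, hRyx] at hsolved
    exact ⟨P x y, hsolved⟩
  · exact exists_isWeakDecomp
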